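/- arXiv:2411.06900 — 2 statements merged into one kernel-verified Lean document; each statement's English description precedes it below -/
import Mathlib

section
/- Let Γ be a graph on n vertices without isolated vertices with γ_2(Γ) < n, let Ω be a graph, and v ∈ V(Ω). Then γ_2(Γ ∘_v Ω) = n·γ_2(Ω) if and only if γ_2(Ω − v) ≥ γ_2(Ω). -/
/-!
The copy of `Ω` at a vertex `a` meets a 2-dominating set `D` of `Γ ∘_v Ω` in a set that
2-dominates every non-root vertex of the copy, since such vertices only see their own copy.
That set is therefore 2-dominating in `Ω` if it contains the root and in `Ω - v` otherwise, so
`γ₂(Γ ∘_v Ω) ≥ n · min (γ₂(Ω), γ₂(Ω - v))`. Conversely, `n` copies of a minimum 2-dominating set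
of `Ω` give `γ₂(Γ ∘_v Ω) ≤ n · γ₂(Ω)`, while `n` copies of one of `Ω - v`, together with the roots
over a minimum 2-dominating set of `Γ`, give `γ₂(Γ ∘_v Ω) ≤ n · γ₂(Ω - v) + γ₂(Γ)`, which is
smaller than `n · γ₂(Ω)` as soon as `γ₂(Ω - v) < γ₂(Ω)` and `γ₂(Γ) < n`.
-/

open SimpleGraph

variable {V : Type*}

/-- `D` is a dominating set of `G`: every vertex is in `D` or adjacent to a vertex of `D`. -/
def IsDominating (G : SimpleGraph V) (D : Set V) : Prop :=
  ∀ u : V, u ∈ D ∨ ∃ d ∈ D, G.Adj u d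

/-- `D` is a total dominating set of `G`: every vertex has a neighbor in `D`. -/
def IsTotalDominating (G : SimpleGraph V) (D : Set V) : Prop :=
  ∀ u : V, ∃ d ∈ D, G.Adj u d

/-- `R` is a resolving set of `G`. -/
def IsResolving (G : SimpleGraph V) (R : Set V) : Prop :=
  ∀ u v : V, u ≠ v → ∃ r ∈ R, G.dist u r ≠ G.dist v r

/-- `D` is an independent set of `G`. -/
def IsIndependentSet (G : SimpleGraph V) (D : Set V) : Prop :=
  ∀ u ∈ D, ∀ v ∈ D, ¬ G.Adj u v

/-- the subgraph of `G` induced by `D` is connected. -/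
def InducedConnected (G : SimpleGraph V) (D : Set V) : Prop :=
  (G.induce D).Connected

/-- closed neighborhood -/
def closedNbhd (G : SimpleGraph V) (u : V) : Set V :=
  insert u (G.neighborSet u)

/-- `D` is a double dominating set of `G`: `|N[u] ∩ D| ≥ 2` for every vertex `u`. -/
def IsDoubleDominating (G : SimpleGraph V) (D : Set V) : Prop :=
  ∀ u : V, 2 ≤ (closedNbhd G u ∩ D).ncard

/-- `D` is a 2-dominating set of `G`: every vertex outside `D` has ≥ 2 neighbors in `D`. -/
def IsTwoDominating (G : SimpleGraph V) (D : Set V) : Prop :=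
  ∀ u : V, u ∉ D → 2 ≤ (G.neighborSet u ∩ D).ncard

/-- minimum cardinality of a set of vertices satisfying `P`. -/
noncomputable def minCard (P : Set V → Prop) : ℕ :=
  sInf {n : ℕ | ∃ D : Set V, P D ∧ D.ncard = n}

noncomputable def gamma (G : SimpleGraph V) : ℕ := minCard (IsDominating G)
noncomputable def gammaT (G : SimpleGraph V) : ℕ := minCard (IsTotalDominating G)
noncomputable def gammaC (G : SimpleGraph V) : ℕ :=
  minCard (fun D => IsDominating G D ∧ InducedConnected G D)
noncomputable def gammaI (G : SimpleGraph V) : ℕ :=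
  minCard (fun D => IsDominating G D ∧ IsIndependentSet G D)
noncomputable def gammaX2 (G : SimpleGraph V) : ℕ := minCard (IsDoubleDominating G)
noncomputable def gamma2 (G : SimpleGraph V) : ℕ := minCard (IsTwoDominating G)
noncomputable def mdim (G : SimpleGraph V) : ℕ := minCard (IsResolving G)
noncomputable def gammaR (G : SimpleGraph V) : ℕ :=
  minCard (fun D => IsDominating G D ∧ IsResolving G D)
noncomputable def gammaRI (G : SimpleGraph V) : ℕ :=
  minCard (fun D => IsDominating G D ∧ IsIndependentSet G D ∧ IsResolving G D)
noncomputable def gammaRT (G : SimpleGraph V) : ℕ :=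
  minCard (fun D => IsTotalDominating G D ∧ IsResolving G D)
noncomputable def gammaRC (G : SimpleGraph V) : ℕ :=
  minCard (fun D => IsDominating G D ∧ InducedConnected G D ∧ IsResolving G D)

/-- `u` and `v` are twins: `N(u) = N(v)` or `N[u] = N[v]`. -/
def AreTwins (G : SimpleGraph V) (u v : V) : Prop :=
  G.neighborSet u = G.neighborSet v ∨ closedNbhd G u = closedNbhd G v

/-- The rooted product `Γ ∘_v Ω`: a copy of `Ω` is attached at its root `v`
to every vertex of `Γ`. -/
def rootedProduct {α β : Type*} (Γ : SimpleGraph α) (Ω : SimpleGraph β) (v : β) :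
    SimpleGraph (α × β) where
  Adj p q := (p.2 = v ∧ q.2 = v ∧ Γ.Adj p.1 q.1) ∨ (p.1 = q.1 ∧ Ω.Adj p.2 q.2)
  symm := by
    constructor
    intro p q h
    rcases h with ⟨h1, h2, h3⟩ | ⟨h1, h2⟩
    · exact Or.inl ⟨h2, h1, h3.symm⟩
    · exact Or.inr ⟨h1.symm, h2.symm⟩
  loopless := by
    constructor
    intro p h
    rcases h with ⟨_, _, h⟩ | ⟨_, h⟩ <;> exact h.ne rfl

/-- Vertex type of the fractal cubic network `FCN l`. -/
def FCNVert : ℕ → Type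
  | 0 => Fin 4
  | (l + 1) => Fin 4 × FCNVert l

/-- Auxiliary vertex `(01)^{l+1}` of `FCN l` (labels `00,01,11,10` ↦ `0,1,2,3`). -/
def fcnAux : (l : ℕ) → FCNVert l
  | 0 => ((1 : Fin 4) : FCNVert 0)
  | (l + 1) => (((1 : Fin 4), fcnAux l) : FCNVert (l + 1))

/-- The designated root `10(01)^l` of `FCN l`. -/
def fcnRoot : (l : ℕ) → FCNVert l
  | 0 => ((3 : Fin 4) : FCNVert 0)
  | (l + 1) => (((3 : Fin 4), fcnAux l) : FCNVert (l + 1))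

/-- The fractal cubic network: `FCN 0 = C₄` and
`FCN (l+1) = C₄ ∘_v FCN l`, rooted at the designated root of `FCN l`. -/
def FCN : (l : ℕ) → SimpleGraph (FCNVert l)
  | 0 => cycleGraph 4
  | (l + 1) => rootedProduct (cycleGraph 4) (FCN l) (fcnRoot l)

open Set

section TwoDomination

variable {α β : Type*}

lemma gamma2_le_ncard (G : SimpleGraph V) {D : Set V} (hD : IsTwoDominating G D) :
    gamma2 G ≤ D.ncard :=
  Nat.sInf_le ⟨D, hD, rfl⟩

lemma exists_isTwoDominating_ncard_eq_gamma2 (G : SimpleGraph V) :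
    ∃ D, IsTwoDominating G D ∧ D.ncard = gamma2 G :=
  Nat.sInf_mem (s := {n | ∃ D, IsTwoDominating G D ∧ D.ncard = n})
    ⟨_, univ, fun u hu => (hu (mem_univ u)).elim, rfl⟩

lemma ncard_eq_sum_ncard_preimage_prodMk [Fintype α] [Finite β] (D : Set (α × β)) :
    D.ncard = ∑ a, (Prod.mk a ⁻¹' D).ncard := by
  rw [← Nat.card_coe_set_eq,
    Nat.card_congr (Equiv.subtypeProdEquivSigmaSubtype fun a b => (a, b) ∈ D), Nat.card_sigma]
  rfl

def IsTwoDominatingOn (G : SimpleGraph V) (s S : Set V) : Prop :=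
  ∀ u ∈ s, u ∉ S → 2 ≤ (G.neighborSet u ∩ S).ncard

lemma IsTwoDominatingOn.isTwoDominating {G : SimpleGraph V} {s S : Set V}
    (hS : IsTwoDominatingOn G s S) (hsS : sᶜ ⊆ S) : IsTwoDominating G S :=
  fun u hu => hS u (by_contra fun hus => hu (hsS hus)) hu

lemma isTwoDominating_induce_preimage_iff {G : SimpleGraph V} {s S : Set V} (hSs : S ⊆ s) :
    IsTwoDominating (G.induce s) (Subtype.val ⁻¹' S) ↔ IsTwoDominatingOn G s S := by
  have hcard (x : s) : ((G.induce s).neighborSet x ∩ Subtype.val ⁻¹' S).ncard =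
      (G.neighborSet x ∩ S).ncard :=
    show (Subtype.val ⁻¹' (G.neighborSet x ∩ S)).ncard = _ from
      ncard_preimage_of_injective_subset_range Subtype.val_injective
        (by rw [Subtype.range_coe]; exact inter_subset_right.trans hSs)
  refine ⟨fun hD u hu huS => ?_, fun hS x hx => ?_⟩
  · simpa only [hcard] using hD ⟨u, hu⟩ huS
  · simpa only [hcard] using hS x x.2 hx

lemma min_gamma2_le_ncard {G : SimpleGraph V} {v : V} {S : Set V}
    (hS : IsTwoDominatingOn G {w | w ≠ v} S) :
    min (gamma2 G) (gamma2 (G.induce {w | w ≠ v})) ≤ S.ncard := by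
  by_cases hv : v ∈ S
  · refine min_le_of_left_le (gamma2_le_ncard G (hS.isTwoDominating ?_))
    intro w hw
    obtain rfl : w = v := by simpa using hw
    exact hv
  · have hSv : S ⊆ {w | w ≠ v} := fun w hw hwv => hv (hwv ▸ hw)
    refine min_le_of_right_le ?_
    calc gamma2 (G.induce {w | w ≠ v}) ≤ (Subtype.val ⁻¹' S : Set {w | w ≠ v}).ncard :=
          gamma2_le_ncard _ ((isTwoDominating_induce_preimage_iff hSv).mpr hS)
      _ = S.ncard := ncard_preimage_of_injective_subset_range Subtype.val_injective
          (by rwa [Subtype.range_coe])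

section RootedProduct

variable {Γ : SimpleGraph α} {Ω : SimpleGraph β} {v : β}

lemma rootedProduct_neighborSet_inter_of_ne {u : β} (hu : u ≠ v) (a : α) (D : Set (α × β)) :
    (rootedProduct Γ Ω v).neighborSet (a, u) ∩ D =
      Prod.mk a '' (Ω.neighborSet u ∩ Prod.mk a ⁻¹' D) := by
  ext ⟨b, w⟩
  simp only [mem_inter_iff, mem_neighborSet, rootedProduct, mem_image, mem_preimage, Prod.mk.injEq]
  constructor
  · rintro ⟨⟨huv, -⟩ | ⟨rfl, hw⟩, hD⟩
    · exact absurd huv hu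
    · exact ⟨w, ⟨hw, hD⟩, rfl, rfl⟩
  · rintro ⟨w, ⟨hw, hD⟩, rfl, rfl⟩
    exact ⟨Or.inr ⟨rfl, hw⟩, hD⟩

lemma IsTwoDominating.isTwoDominatingOn_preimage_prodMk {D : Set (α × β)}
    (hD : IsTwoDominating (rootedProduct Γ Ω v) D) (a : α) :
    IsTwoDominatingOn Ω {w | w ≠ v} (Prod.mk a ⁻¹' D) := by
  intro u hu huD
  have := hD (a, u) huD
  rwa [rootedProduct_neighborSet_inter_of_ne hu,
    ncard_image_of_injective _ (Prod.mk_right_injective a)] at this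

variable [Finite α] [Finite β]

lemma ncard_neighborSet_inter_le_rootedProduct_copy {a : α} {u : β} {S : Set β}
    {D : Set (α × β)} (hSD : Prod.mk a '' S ⊆ D) :
    (Ω.neighborSet u ∩ S).ncard ≤ ((rootedProduct Γ Ω v).neighborSet (a, u) ∩ D).ncard := by
  rw [← ncard_image_of_injective _ (Prod.mk_right_injective a)]
  refine ncard_le_ncard ?_
  rintro _ ⟨w, ⟨hw, hwS⟩, rfl⟩
  exact ⟨Or.inr ⟨rfl, hw⟩, hSD (mem_image_of_mem _ hwS)⟩

lemma ncard_neighborSet_inter_le_rootedProduct_root {a : α} {A : Set α}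
    {D : Set (α × β)} (hAD : (·, v) '' A ⊆ D) :
    (Γ.neighborSet a ∩ A).ncard ≤ ((rootedProduct Γ Ω v).neighborSet (a, v) ∩ D).ncard := by
  rw [← ncard_image_of_injective _ (Prod.mk_left_injective v)]
  refine ncard_le_ncard ?_
  rintro _ ⟨b, ⟨hb, hbA⟩, rfl⟩
  exact ⟨Or.inl ⟨rfl, rfl, hb⟩, hAD (mem_image_of_mem _ hbA)⟩


lemma isTwoDominating_rootedProduct_univ_prod {S : Set β} (hS : IsTwoDominating Ω S) :
    IsTwoDominating (rootedProduct Γ Ω v) (univ ×ˢ S) := by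
  rintro ⟨a, u⟩ hau
  have hu : u ∉ S := fun hu => hau ⟨mem_univ a, hu⟩
  exact (hS u hu).trans (ncard_neighborSet_inter_le_rootedProduct_copy
    (image_subset_iff.mpr fun w hw => ⟨mem_univ a, hw⟩))

lemma isTwoDominating_rootedProduct_univ_prod_union {S : Set β} {A : Set α}
    (hS : IsTwoDominatingOn Ω {w | w ≠ v} S) (hA : IsTwoDominating Γ A) :
    IsTwoDominating (rootedProduct Γ Ω v) (univ ×ˢ S ∪ A ×ˢ {v}) := by
  rintro ⟨a, u⟩ hau
  by_cases huv : u = v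
  · subst huv
    have ha : a ∉ A := fun ha => hau (Or.inr ⟨ha, rfl⟩)
    exact (hA a ha).trans (ncard_neighborSet_inter_le_rootedProduct_root
      (image_subset_iff.mpr fun b hb => Or.inr ⟨hb, rfl⟩))
  · have hu : u ∉ S := fun hu => hau (Or.inl ⟨mem_univ a, hu⟩)
    exact (hS u huv hu).trans (ncard_neighborSet_inter_le_rootedProduct_copy
      (image_subset_iff.mpr fun w hw => Or.inl ⟨mem_univ a, hw⟩))

end RootedProduct

section Bounds

variable [Fintype α] [Finite β] (Γ : SimpleGraph α) (Ω : SimpleGraph β) (v : β)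

lemma gamma2_rootedProduct_le_card_mul_gamma2 :
    gamma2 (rootedProduct Γ Ω v) ≤ Fintype.card α * gamma2 Ω := by
  obtain ⟨S, hS, hScard⟩ := exists_isTwoDominating_ncard_eq_gamma2 Ω
  calc gamma2 (rootedProduct Γ Ω v) ≤ (univ ×ˢ S).ncard :=
        gamma2_le_ncard _ (isTwoDominating_rootedProduct_univ_prod hS)
    _ = Fintype.card α * gamma2 Ω := by
        rw [ncard_prod, ncard_univ, Nat.card_eq_fintype_card, hScard]

lemma gamma2_rootedProduct_le_card_mul_gamma2_induce_add :
    gamma2 (rootedProduct Γ Ω v) ≤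
      Fintype.card α * gamma2 (Ω.induce {w | w ≠ v}) + gamma2 Γ := by
  obtain ⟨T, hT, hTcard⟩ := exists_isTwoDominating_ncard_eq_gamma2 (Ω.induce {w | w ≠ v})
  obtain ⟨A, hA, hAcard⟩ := exists_isTwoDominating_ncard_eq_gamma2 Γ
  rw [← preimage_image_eq T Subtype.val_injective] at hT
  have hS : IsTwoDominatingOn Ω {w | w ≠ v} (Subtype.val '' T) :=
    (isTwoDominating_induce_preimage_iff (Subtype.coe_image_subset _ T)).mp hT
  calc gamma2 (rootedProduct Γ Ω v) ≤ (univ ×ˢ (Subtype.val '' T) ∪ A ×ˢ {v}).ncard :=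
        gamma2_le_ncard _ (isTwoDominating_rootedProduct_univ_prod_union hS hA)
    _ ≤ (univ ×ˢ (Subtype.val '' T)).ncard + (A ×ˢ {v}).ncard := ncard_union_le _ _
    _ = Fintype.card α * gamma2 (Ω.induce {w | w ≠ v}) + gamma2 Γ := by
        rw [ncard_prod, ncard_prod, ncard_univ, Nat.card_eq_fintype_card,
          ncard_image_of_injective _ Subtype.val_injective, ncard_singleton, mul_one,
          hTcard, hAcard]

lemma card_mul_min_gamma2_le_gamma2_rootedProduct :
    Fintype.card α * min (gamma2 Ω) (gamma2 (Ω.induce {w | w ≠ v})) ≤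
      gamma2 (rootedProduct Γ Ω v) := by
  obtain ⟨D, hD, hDcard⟩ := exists_isTwoDominating_ncard_eq_gamma2 (rootedProduct Γ Ω v)
  calc Fintype.card α * min (gamma2 Ω) (gamma2 (Ω.induce {w | w ≠ v}))
      = ∑ _a : α, min (gamma2 Ω) (gamma2 (Ω.induce {w | w ≠ v})) := by simp
    _ ≤ ∑ a, (Prod.mk a ⁻¹' D).ncard := Finset.sum_le_sum fun a _ =>
        min_gamma2_le_ncard (hD.isTwoDominatingOn_preimage_prodMk a)
    _ = gamma2 (rootedProduct Γ Ω v) := by rw [← ncard_eq_sum_ncard_preimage_prodMk, hDcard]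

end Bounds

end TwoDomination

theorem stmt12_general {α β : Type*} [Fintype α] [Fintype β]
    (Γ : SimpleGraph α) (Ω : SimpleGraph β) (v : β)
    (h2 : gamma2 Γ < Fintype.card α) :
    gamma2 (rootedProduct Γ Ω v) = Fintype.card α * gamma2 Ω ↔
      gamma2 Ω ≤ gamma2 (Ω.induce {w : β | w ≠ v}) := by
  refine ⟨fun heq => ?_, fun hle => ?_⟩
  · by_contra! hlt
    refine (gamma2_rootedProduct_le_card_mul_gamma2_induce_add Γ Ω v).not_gt ?_
    calc Fintype.card α * gamma2 (Ω.induce {w | w ≠ v}) + gamma2 Γ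
        < Fintype.card α * (gamma2 (Ω.induce {w | w ≠ v}) + 1) := by rw [mul_add_one]; omega
      _ ≤ Fintype.card α * gamma2 Ω := Nat.mul_le_mul_left _ hlt
      _ = gamma2 (rootedProduct Γ Ω v) := heq.symm
  · refine le_antisymm (gamma2_rootedProduct_le_card_mul_gamma2 Γ Ω v) ?_
    simpa only [min_eq_left hle] using card_mul_min_gamma2_le_gamma2_rootedProduct Γ Ω v

theorem stmt12 {α β : Type*} [Fintype α] [Fintype β]
    (Γ : SimpleGraph α) (Ω : SimpleGraph β) (v : β)
    (hiso : ∀ a : α, ∃ b : α, Γ.Adj a b)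
    (h2 : gamma2 Γ < Fintype.card α) :
    gamma2 (rootedProduct Γ Ω v) = Fintype.card α * gamma2 Ω ↔
      gamma2 Ω ≤ gamma2 (Ω.induce {w : β | w ≠ v}) :=
  stmt12_general Γ Ω v h2
end

section
/- The domination number of the fractal cubic network satisfies the recurrence γ(FCN(l)) = 4·γ(FCN(l−1)) − 2 for all l ≥ 1, where γ(FCN(0)) = 2. -/
open SimpleGraph

variable {V : Type*}

/-!
Cut a dominating set `D` of `FCN (l+1)` into its four copies `Dᵢ` in `FCN l`, whose domination
number is `γ`. Adding the root to `Dᵢ` gives a dominating set of `FCN l`, so `|Dᵢ| ≥ γ - 1`.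
A copy whose root is not dominated inside the copy is dominated from an adjacent copy that
contains its own root and is therefore a dominating set of `FCN l`. So the copies with
`|Dᵢ| ≥ γ` dominate `C₄`; there are at least two of them, and `|D| ≥ 4(γ - 1) + 2`.

For the matching upper bound, carry along at each level a set `B` of size `γ - 1` dominating
everything but the root, a set `E` of size `γ - 1` containing the root and dominating
everything but `w = (01)^{l+1}`, and a dominating set `S` of size `γ` containing both. The next
root is `w` in copy `3` and the next `w` is `w` in copy `1`, so gluing `B, S, B, E`,
`B, E, B, S` and `B, S, B, S` along `C₄` gives the three sets one level up.
-/

section Domination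

def Dominates (G : SimpleGraph V) (D : Set V) (u : V) : Prop :=
  u ∈ D ∨ ∃ d ∈ D, G.Adj u d

theorem Dominates.mono {G : SimpleGraph V} {D D' : Set V} {u : V} (h : Dominates G D u)
    (hDD' : D ⊆ D') : Dominates G D' u := by
  rcases h with h | ⟨d, hd, hadj⟩
  exacts [Or.inl (hDD' h), Or.inr ⟨d, hDD' hd, hadj⟩]

theorem minCard_eq {P : Set V → Prop} {a : ℕ} (hle : ∀ D, P D → a ≤ D.ncard)
    (hex : ∃ D, P D ∧ D.ncard = a) : minCard P = a :=
  le_antisymm (Nat.sInf_le hex) (le_csInf ⟨a, hex⟩ fun _ ⟨D, hD, hcard⟩ => hcard ▸ hle D hD)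

end Domination

section RootedProduct

variable {α β : Type*} {Γ : SimpleGraph α} {Ω : SimpleGraph β} {v : β}

theorem ncard_eq_sum_ncard_preimage_mk [Fintype α] [Finite β] (D : Set (α × β)) :
    D.ncard = ∑ i, (Prod.mk i ⁻¹' D).ncard := by
  let e : D ≃ Σ i, (Prod.mk i ⁻¹' D) :=
    { toFun := fun p => ⟨p.1.1, p.1.2, p.2⟩
      invFun := fun q => ⟨(q.1, q.2.1), q.2.2⟩
      left_inv := fun _ => rfl
      right_inv := fun _ => rfl }
  simp only [← Nat.card_coe_set_eq, Nat.card_congr e, Nat.card_sigma]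

theorem dominates_preimage_mk_of_ne {D : Set (α × β)}
    (hD : IsDominating (rootedProduct Γ Ω v) D) (i : α) {u : β} (hu : u ≠ v) :
    Dominates Ω (Prod.mk i ⁻¹' D) u := by
  rcases hD (i, u) with h | ⟨⟨j, y⟩, hy, ⟨hv, -, -⟩ | ⟨rfl, hadj⟩⟩
  exacts [Or.inl h, absurd hv hu, Or.inr ⟨y, hy, hadj⟩]

theorem isDominating_preimage_mk_of_dominates_root {D : Set (α × β)}
    (hD : IsDominating (rootedProduct Γ Ω v) D) {i : α}
    (hv : Dominates Ω (Prod.mk i ⁻¹' D) v) : IsDominating Ω (Prod.mk i ⁻¹' D) := fun u => by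
  obtain rfl | hu := eq_or_ne u v
  exacts [hv, dominates_preimage_mk_of_ne hD i hu]

theorem isDominating_insert_root_preimage_mk {D : Set (α × β)}
    (hD : IsDominating (rootedProduct Γ Ω v) D) (i : α) :
    IsDominating Ω (insert v (Prod.mk i ⁻¹' D)) := fun u => by
  obtain rfl | hu := eq_or_ne u v
  exacts [Or.inl (Set.mem_insert u _),
    (dominates_preimage_mk_of_ne hD i hu).mono (Set.subset_insert _ _)]

theorem dominates_root_preimage_mk_or_exists_adj {D : Set (α × β)}
    (hD : IsDominating (rootedProduct Γ Ω v) D) (i : α) :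
    Dominates Ω (Prod.mk i ⁻¹' D) v ∨ ∃ j, Γ.Adj i j ∧ v ∈ Prod.mk j ⁻¹' D := by
  rcases hD (i, v) with h | ⟨⟨j, y⟩, hy, ⟨-, rfl, hadj⟩ | ⟨rfl, hadj⟩⟩
  exacts [Or.inl (Or.inl h), Or.inr ⟨j, hadj, hy⟩, Or.inl (Or.inr ⟨y, hy, hadj⟩)]

/-- The copies that are full dominating sets of `Ω` dominate `Γ`, and every other copy misses
at most the root. -/
theorem le_ncard_of_isDominating_rootedProduct [Fintype α] [Finite β] {a c : ℕ}
    (hΓ : ∀ S, IsDominating Γ S → c ≤ S.ncard) (hΩ : ∀ S, IsDominating Ω S → a ≤ S.ncard)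
    {D : Set (α × β)} (hD : IsDominating (rootedProduct Γ Ω v) D) :
    Fintype.card α * a + c ≤ D.ncard + Fintype.card α := by
  classical
  set full : Finset α := {i | a ≤ (Prod.mk i ⁻¹' D).ncard}
  have hfull : IsDominating Γ full := fun i => by
    by_cases hi : i ∈ full
    · exact Or.inl hi
    rcases dominates_root_preimage_mk_or_exists_adj hD i with hv | ⟨j, hij, hj⟩
    · have := hΩ _ (isDominating_preimage_mk_of_dominates_root hD hv)
      exact absurd (by simpa [full] using this) hi
    · have := hΩ _ (isDominating_preimage_mk_of_dominates_root hD (Or.inl hj))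
      exact Or.inr ⟨j, by simpa [full] using this, hij⟩
  have hcopy : ∀ i, a + (if i ∈ full then 1 else 0) ≤ (Prod.mk i ⁻¹' D).ncard + 1 := fun i => by
    have := (hΩ _ (isDominating_insert_root_preimage_mk hD i)).trans (Set.ncard_insert_le _ _)
    split_ifs with hi
    · simpa [full] using hi
    · omega
  calc Fintype.card α * a + c ≤ ∑ i, (a + if i ∈ full then 1 else 0) := by
        simpa [Finset.sum_add_distrib, Finset.sum_boole, mul_comm] using hΓ _ hfull
    _ ≤ ∑ i, ((Prod.mk i ⁻¹' D).ncard + 1) := Finset.sum_le_sum fun i _ => hcopy i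
    _ = D.ncard + Fintype.card α := by
        simp [Finset.sum_add_distrib, ← ncard_eq_sum_ncard_preimage_mk]

theorem ncard_setOf_mem [Fintype α] [Finite β] (F : α → Set β) :
    {p : α × β | p.2 ∈ F p.1}.ncard = ∑ i, (F i).ncard :=
  ncard_eq_sum_ncard_preimage_mk _

theorem dominates_rootedProduct_of_dominates {F : α → Set β} {i : α} {u : β}
    (h : Dominates Ω (F i) u) :
    Dominates (rootedProduct Γ Ω v) {p | p.2 ∈ F p.1} (i, u) := by
  rcases h with h | ⟨d, hd, hadj⟩
  exacts [Or.inl h, Or.inr ⟨(i, d), hd, Or.inr ⟨rfl, hadj⟩⟩]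

theorem dominates_rootedProduct_root_of_adj {F : α → Set β} {i j : α} (hij : Γ.Adj i j)
    (hj : v ∈ F j) : Dominates (rootedProduct Γ Ω v) {p | p.2 ∈ F p.1} (i, v) :=
  Or.inr ⟨(j, v), hj, Or.inl ⟨rfl, rfl, hij⟩⟩

end RootedProduct

section CycleFour

theorem two_le_ncard_of_isDominating_cycleGraph_four {D : Set (Fin 4)}
    (hD : IsDominating (cycleGraph 4) D) : 2 ≤ D.ncard := by
  obtain ⟨d, hd⟩ : D.Nonempty := by
    rcases hD 0 with h | ⟨d, hd, -⟩
    exacts [⟨0, h⟩, ⟨d, hd⟩]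
  -- `d` does not dominate its antipode `d + 2`
  obtain ⟨e, he, hde⟩ : ∃ e ∈ D, d ≠ e := by
    have key : ∀ d : Fin 4, ¬(d + 2 = d ∨ (cycleGraph 4).Adj (d + 2) d) := by decide
    rcases hD (d + 2) with h | ⟨e, he, hadj⟩
    · exact ⟨d + 2, h, fun h' => key d (Or.inl h'.symm)⟩
    · exact ⟨e, he, by rintro rfl; exact key d (Or.inr hadj)⟩
  calc 2 = ({d, e} : Set (Fin 4)).ncard := (Set.ncard_pair hde).symm
    _ ≤ D.ncard := Set.ncard_le_ncard (Set.insert_subset hd (Set.singleton_subset_iff.2 he))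

variable {β : Type*} {Ω : SimpleGraph β} {r : β}

theorem dominates_rootedProduct_cycleGraph_four {B X Y : Set β}
    (hB : ∀ u ≠ r, Dominates Ω B u) (hX : r ∈ X) (hY : r ∈ Y) (p : Fin 4 × β)
    (h₁ : p.1 = 1 → Dominates Ω X p.2) (h₃ : p.1 = 3 → Dominates Ω Y p.2) :
    Dominates (rootedProduct (cycleGraph 4) Ω r) {q | q.2 ∈ ![B, X, B, Y] q.1} p := by
  obtain ⟨i, u⟩ := p
  have hBcopy : ∀ i : Fin 4, i = 0 ∨ i = 2 → Dominates (rootedProduct (cycleGraph 4) Ω r)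
      {q | q.2 ∈ ![B, X, B, Y] q.1} (i, u) := by
    rintro i (rfl | rfl) <;> obtain rfl | hu := eq_or_ne u r <;>
      first
      | exact dominates_rootedProduct_root_of_adj (j := 1) (by decide) hX
      | exact dominates_rootedProduct_of_dominates (hB u hu)
  fin_cases i
  exacts [hBcopy 0 (Or.inl rfl), dominates_rootedProduct_of_dominates (h₁ rfl),
    hBcopy 2 (Or.inr rfl), dominates_rootedProduct_of_dominates (h₃ rfl)]

end CycleFour

/-- The data of the induction on `l`, for `G = FCN l`, `r` its root, `w = (01)^{l+1}` (the
vertex that becomes the root one level up, in copy `3`) and `a = γ(G)`. -/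
structure DominationProfile (G : SimpleGraph V) (r w : V) (a : ℕ) : Prop where
  le_ncard : ∀ D, IsDominating G D → a ≤ D.ncard
  exists_dominates_ne_root : ∃ B : Set V, (∀ u ≠ r, Dominates G B u) ∧ B.ncard + 1 = a
  exists_root_mem_dominates_ne : ∃ E : Set V, r ∈ E ∧ (∀ u ≠ w, Dominates G E u) ∧
    E.ncard + 1 = a
  exists_isDominating : ∃ S : Set V, r ∈ S ∧ w ∈ S ∧ IsDominating G S ∧ S.ncard = a

namespace DominationProfile

theorem gamma_eq {G : SimpleGraph V} {r w : V} {a : ℕ} (h : DominationProfile G r w a) :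
    gamma G = a := by
  obtain ⟨S, -, -, hS, hcard⟩ := h.exists_isDominating
  exact minCard_eq h.le_ncard ⟨S, hS, hcard⟩

theorem cycleGraph_four : DominationProfile (cycleGraph 4) 3 1 2 where
  le_ncard _ := two_le_ncard_of_isDominating_cycleGraph_four
  exists_dominates_ne_root := ⟨{1}, by simp only [Dominates]; decide, by simp⟩
  exists_root_mem_dominates_ne := ⟨{3}, rfl, by simp only [Dominates]; decide, by simp⟩
  exists_isDominating := ⟨{1, 3}, by simp, by simp, by simp only [IsDominating]; decide,
    Set.ncard_pair (by decide)⟩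

theorem rootedProduct_cycleGraph_four {β : Type*} [Finite β] {Ω : SimpleGraph β} {r w : β}
    {a : ℕ} (h : DominationProfile Ω r w a) :
    DominationProfile (rootedProduct (cycleGraph 4) Ω r) (3, w) (1, w) (4 * a - 2) := by
  obtain ⟨hle, ⟨B, hB, hBcard⟩, ⟨E, hrE, hE, hEcard⟩, ⟨S, hrS, hwS, hS, hScard⟩⟩ := h
  have glue_card : ∀ X Y : Set β,
      {q : Fin 4 × β | q.2 ∈ ![B, X, B, Y] q.1}.ncard = 2 * B.ncard + X.ncard + Y.ncard :=
    fun X Y => by rw [ncard_setOf_mem, Fin.sum_univ_four]; simp; ring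
  refine ⟨fun D hD => ?_, ⟨{q | q.2 ∈ ![B, S, B, E] q.1}, fun p hp => ?_, ?_⟩,
    ⟨{q | q.2 ∈ ![B, E, B, S] q.1}, hwS, fun p hp => ?_, ?_⟩,
    ⟨{q | q.2 ∈ ![B, S, B, S] q.1}, hwS, hwS, fun p => ?_, ?_⟩⟩
  · have := le_ncard_of_isDominating_rootedProduct
      (fun _ => two_le_ncard_of_isDominating_cycleGraph_four) hle hD
    simp only [Fintype.card_fin] at this
    omega
  · exact dominates_rootedProduct_cycleGraph_four hB hrS hrE p (fun _ => hS _)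
      fun h3 => hE _ fun hw => hp (Prod.ext h3 hw)
  · rw [glue_card]; omega
  · exact dominates_rootedProduct_cycleGraph_four hB hrE hrS p
      (fun h1 => hE _ fun hw => hp (Prod.ext h1 hw)) fun _ => hS _
  · rw [glue_card]; omega
  · exact dominates_rootedProduct_cycleGraph_four hB hrS hrS p (fun _ => hS _) fun _ => hS _
  · rw [glue_card]; omega

end DominationProfile

instance FCNVert.finite : (l : ℕ) → Finite (FCNVert l)
  | 0 => inferInstanceAs (Finite (Fin 4))
  | l + 1 => have := FCNVert.finite l; inferInstanceAs (Finite (Fin 4 × FCNVert l))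

theorem dominationProfile_FCN_succ {l a : ℕ}
    (h : DominationProfile (FCN l) (fcnRoot l) (fcnAux l) a) :
    DominationProfile (FCN (l + 1)) (fcnRoot (l + 1)) (fcnAux (l + 1)) (4 * a - 2) :=
  h.rootedProduct_cycleGraph_four

theorem dominationProfile_FCN (l : ℕ) :
    DominationProfile (FCN l) (fcnRoot l) (fcnAux l) (gamma (FCN l)) := by
  induction l with
  | zero => exact DominationProfile.cycleGraph_four.gamma_eq ▸ DominationProfile.cycleGraph_four
  | succ l ih => exact (dominationProfile_FCN_succ ih).gamma_eq ▸ dominationProfile_FCN_succ ih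

theorem stmt13 :
    gamma (FCN 0) = 2 ∧ ∀ l : ℕ, gamma (FCN (l + 1)) = 4 * gamma (FCN l) - 2 :=
  ⟨DominationProfile.cycleGraph_four.gamma_eq,
    fun l => (dominationProfile_FCN_succ (dominationProfile_FCN l)).gamma_eq⟩
end
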